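/- arXiv:1706.00649 — 2 statements merged into one kernel-verified Lean document; each statement's English description precedes it below -/
import Mathlib

section
/- For each b ≥ 0, the set Z_b = {(x,y) ∈ Aff₊(2) : (x-1) + by = 0} is a subgroup of Aff₊(2) (it equals the set of singularities of the linear vector field 𝒳(x,y) = ((x-1)+by)∂/∂y), and Z_b is a normal subgroup of Aff₊(2) if and only if b = 0. -/
noncomputable section

/-- The connected 2-dimensional affine group `Aff₊(2)`, identified with
`{(x, y) : x > 0, y ∈ ℝ}` with product `(x,y)·(x',y') = (xx', xy' + y)`. -/
abbrev Aff : Type := {p : ℝ × ℝ // 0 < p.1}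

namespace Aff

instance : Mul Aff :=
  ⟨fun p q => ⟨(p.val.1 * q.val.1, p.val.1 * q.val.2 + p.val.2),
    mul_pos p.property q.property⟩⟩

instance : One Aff := ⟨⟨(1, 0), one_pos⟩⟩

instance : Inv Aff :=
  ⟨fun p => ⟨(p.val.1⁻¹, -p.val.2 / p.val.1), inv_pos.mpr p.property⟩⟩

theorem mul_def (p q : Aff) :
    (↑(p * q) : ℝ × ℝ) = (p.val.1 * q.val.1, p.val.1 * q.val.2 + p.val.2) := rfl

theorem one_def : ((1 : Aff) : ℝ × ℝ) = (1, 0) := rfl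

theorem inv_def (p : Aff) : (↑(p⁻¹) : ℝ × ℝ) = (p.val.1⁻¹, -p.val.2 / p.val.1) := rfl

instance : Group Aff where
  mul_assoc p q r := by
    apply Subtype.ext
    simp only [mul_def, Prod.ext_iff]
    constructor <;> ring
  one_mul p := by
    apply Subtype.ext
    simp only [mul_def, one_def, Prod.ext_iff]
    constructor <;> ring
  mul_one p := by
    apply Subtype.ext
    simp only [mul_def, one_def, Prod.ext_iff]
    constructor <;> ring
  inv_mul_cancel p := by
    apply Subtype.ext
    have hx : p.val.1 ≠ 0 := ne_of_gt p.property
    simp only [mul_def, inv_def, one_def, Prod.ext_iff]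
    constructor <;> field_simp <;> ring

/-- The linear vector field associated to the derivation `D = [[0,0],[1,b]]`:
`𝒳(x,y) = ((x-1) + by) ∂/∂y`, written in the coordinates `(∂/∂x, ∂/∂y)`. -/
def linVF (b : ℝ) (g : Aff) : ℝ × ℝ := (0, (g.val.1 - 1) + b * g.val.2)

/-- The set `Z_b = {(x,y) : (x-1) + by = 0}`. -/
def Zset (b : ℝ) : Set Aff := {g | (g.val.1 - 1) + b * g.val.2 = 0}

theorem conj_val (g n : Aff) :
    (g * n * g⁻¹).val = (n.val.1, g.val.1 * n.val.2 + g.val.2 * (1 - n.val.1)) := by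
  have hg : g.val.1 ≠ 0 := g.property.ne'
  simp only [mul_def, inv_def, Prod.ext_iff]
  exact ⟨by field_simp, by field_simp; ring⟩

theorem mem_Zset_iff {b : ℝ} {g : Aff} : g ∈ Zset b ↔ g.val.1 - 1 + b * g.val.2 = 0 := Iff.rfl

theorem linVF_eq_zero_iff {b : ℝ} {g : Aff} : linVF b g = 0 ↔ (linVF b g).2 = 0 := by
  simp [linVF, Prod.ext_iff]

theorem Zset_eq_setOf_linVF_eq_zero (b : ℝ) : Zset b = {g : Aff | linVF b g = 0} :=
  Set.ext fun _ => linVF_eq_zero_iff.symm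

theorem linVF_one (b : ℝ) : linVF b 1 = 0 := by
  simp [linVF, one_def]

/-- The linearity of `𝒳`: `𝒳(pq) = (dL_p) 𝒳(q) + (dR_q) 𝒳(p)`, where `dL_p` scales `∂/∂y`
by `x_p` and `dR_q` fixes it. -/
theorem linVF_mul_snd (b : ℝ) (p q : Aff) :
    (linVF b (p * q)).2 = p.val.1 * (linVF b q).2 + (linVF b p).2 := by
  simp only [linVF, mul_def]
  ring

def singularSubgroup (b : ℝ) : Subgroup Aff where
  carrier := {g | linVF b g = 0}
  mul_mem' {p q} (hp : linVF b p = 0) (hq : linVF b q = 0) := by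
    rw [linVF_eq_zero_iff] at hp hq
    show linVF b (p * q) = 0
    rw [linVF_eq_zero_iff, linVF_mul_snd, hp, hq, mul_zero, add_zero]
  one_mem' := linVF_one b
  inv_mem' {p} (hp : linVF b p = 0) := by
    rw [linVF_eq_zero_iff] at hp
    show linVF b p⁻¹ = 0
    rw [linVF_eq_zero_iff]
    have h := linVF_mul_snd b p p⁻¹
    rw [mul_inv_cancel, linVF_one, hp, add_zero] at h
    exact (mul_eq_zero.mp h.symm).resolve_left p.property.ne'

theorem coe_singularSubgroup (b : ℝ) : (singularSubgroup b : Set Aff) = Zset b :=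
  (Zset_eq_setOf_linVF_eq_zero b).symm

theorem mem_singularSubgroup_iff {b : ℝ} {g : Aff} :
    g ∈ singularSubgroup b ↔ g.val.1 - 1 + b * g.val.2 = 0 := by
  rw [← SetLike.mem_coe, coe_singularSubgroup, mem_Zset_iff]

/-- Conjugation by the dilation `(2, 0)` doubles `y` and fixes `x`, so it moves
`(1 + b², -b) ∈ Z_b` out of `Z_b` unless `b = 0`. -/
theorem singularSubgroup_normal_iff (b : ℝ) : (singularSubgroup b).Normal ↔ b = 0 := by
  constructor
  · intro hN
    let n : Aff := ⟨(1 + b ^ 2, -b), by positivity⟩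
    let g : Aff := ⟨(2, 0), two_pos⟩
    have hn : n ∈ singularSubgroup b := by
      rw [mem_singularSubgroup_iff]
      ring
    have hconj := hN.conj_mem n hn g
    rw [mem_singularSubgroup_iff, conj_val] at hconj
    have hb2 : b ^ 2 = 0 := by
      simp only [n, g] at hconj
      linear_combination -hconj
    exact pow_eq_zero_iff two_ne_zero |>.mp hb2
  · rintro rfl
    refine ⟨fun n hn g => ?_⟩
    rw [mem_singularSubgroup_iff] at hn ⊢
    rw [conj_val]
    simpa using hn

end Aff

theorem aff_Zb_subgroup_and_normal_iff_general (b : ℝ) :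
    Aff.Zset b = {g : Aff | Aff.linVF b g = 0} ∧
    (∃ H : Subgroup Aff, (H : Set Aff) = Aff.Zset b ∧ (H.Normal ↔ b = 0)) :=
  ⟨Aff.Zset_eq_setOf_linVF_eq_zero b,
    Aff.singularSubgroup b, Aff.coe_singularSubgroup b, Aff.singularSubgroup_normal_iff b⟩

/-- For `b ≥ 0`, the set `Z_b = {(x,y) : (x-1) + by = 0}`, which is
the set of singularities of the linear vector field `𝒳(x,y) = ((x-1)+by) ∂/∂y`,
is a subgroup of `Aff₊(2)`, and it is a normal subgroup if and only if `b = 0`. -/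
theorem aff_Zb_subgroup_and_normal_iff (b : ℝ) (hb : 0 ≤ b) :
    Aff.Zset b = {g : Aff | Aff.linVF b g = 0} ∧
    (∃ H : Subgroup Aff, (H : Set Aff) = Aff.Zset b ∧ (H.Normal ↔ b = 0)) :=
  aff_Zb_subgroup_and_normal_iff_general b

end
end

section
/- Let Σ be an ARS on the 3-dimensional Heisenberg group G whose distribution Δ is a Lie subalgebra, with associated derivation D. Then the singular locus Z of Σ is a Lie subgroup of G whose Lie algebra is D⁻¹(Δ), and the distribution Δ is nowhere tangent to Z, i.e. Δ_g ≠ T_gZ for every g ∈ Z; consequently Σ has no tangency points. -/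
open Set ENNReal

noncomputable section

/-- The 3-dimensional Heisenberg group, identified in coordinates with `ℝ³`:
`(x,y,z)` corresponds to the unipotent matrix `[[1,x,z],[0,1,y],[0,0,1]]`. -/
abbrev Heis : Type := ℝ × ℝ × ℝ

/-- The group product of the Heisenberg group in coordinates. -/
def heisMul (p q : Heis) : Heis := (p.1 + q.1, p.2.1 + q.2.1, p.2.2 + q.2.2 + p.1 * q.2.1)

/-- The identity element. -/
def heisOne : Heis := (0, 0, 0)

/-- The group inverse. -/
def heisInv (p : Heis) : Heis := (-p.1, -p.2.1, -p.2.2 + p.1 * p.2.1)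

/-- The left translation by `g`. -/
def heisLT (g : Heis) : Heis → Heis := fun p => heisMul g p

/-- The left-invariant vector field `X`. -/
def heisX : Heis → Heis := fun _ => (1, 0, 0)

/-- The left-invariant vector field `Y`. -/
def heisY (p : Heis) : Heis := (0, 1, p.1)

/-- The left-invariant vector field `Z`. -/
def heisZ : Heis → Heis := fun _ => (0, 0, 1)

/-- The left-invariant vector field with coordinates `u = (u₁,u₂,u₃)` in the basis
`(X,Y,Z)` of the Lie algebra. -/
def heisLI (u : Heis) : Heis → Heis := fun p => u.1 • heisX p + u.2.1 • heisY p + u.2.2 • heisZ p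

/-- The Lie bracket of the Heisenberg Lie algebra in the basis `(X,Y,Z)`:
`[X,Y] = Z` and all the other brackets of basis elements vanish. -/
def heisBracket (u v : Heis) : Heis := (0, 0, u.1 * v.2.1 - v.1 * u.2.1)

/-- The data of an ARS on the Heisenberg group: two left-invariant vector fields
`B₁, B₂` (given by their coordinates in the basis `(X,Y,Z)`) and the linear vector
field associated to the derivation `D = [[a,b,0],[c,d,0],[e,f,a+d]]`. -/
structure HeisARS where
  B1 : Heis
  B2 : Heis
  a : ℝ
  b : ℝ
  c : ℝ
  d : ℝ
  e : ℝ
  f : ℝ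

/-- The linear vector field associated to the derivation `D = [[a,b,0],[c,d,0],[e,f,a+d]]`:
`𝒳(x,y,z) = (ax+by)∂/∂x + (cx+dy)∂/∂y + (ex+fy+(a+d)z+½cx²+½by²)∂/∂z`. -/
def HeisARS.lin (S : HeisARS) (p : Heis) : Heis :=
  (S.a * p.1 + S.b * p.2.1,
   S.c * p.1 + S.d * p.2.1,
   S.e * p.1 + S.f * p.2.1 + (S.a + S.d) * p.2.2 + S.c * p.1 ^ 2 / 2 + S.b * p.2.1 ^ 2 / 2)

/-- The first left-invariant vector field of the frame. -/
def HeisARS.V1 (S : HeisARS) : Heis → Heis := heisLI S.B1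

/-- The second left-invariant vector field of the frame. -/
def HeisARS.V2 (S : HeisARS) : Heis → Heis := heisLI S.B2

/-- The left-invariant distribution `Δ = span{B₁, B₂}` (at the identity). -/
def HeisARS.Delta (S : HeisARS) : Submodule ℝ Heis := Submodule.span ℝ {S.B1, S.B2}

/-- The Lie bracket of two vector fields on `ℝ³`, in coordinates. -/
def vfBracketH (V W : Heis → Heis) : Heis → Heis := fun p =>
  fderiv ℝ W p (V p) - fderiv ℝ V p (W p)

/-- The Lie algebra of vector fields generated by a family `F` of vector fields. -/
inductive HeisLieGen (F : Set (Heis → Heis)) : (Heis → Heis) → Prop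
  | base {V : Heis → Heis} : V ∈ F → HeisLieGen F V
  | add {V W : Heis → Heis} : HeisLieGen F V → HeisLieGen F W → HeisLieGen F (V + W)
  | smul (c : ℝ) {V : Heis → Heis} : HeisLieGen F V → HeisLieGen F (c • V)
  | bracket {V W : Heis → Heis} : HeisLieGen F V → HeisLieGen F W → HeisLieGen F (vfBracketH V W)

/-- The conditions for the data to define an ARS: the frame `{𝒳, B₁, B₂}` has full
rank on a nonempty subset of `G` and satisfies the rank condition. -/
def HeisARS.IsARS (S : HeisARS) : Prop :=
  (∃ p : Heis, Submodule.span ℝ {S.lin p, S.V1 p, S.V2 p} = ⊤) ∧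
  ∀ p : Heis, Submodule.span ℝ
    {v : Heis | ∃ V : Heis → Heis, HeisLieGen {S.lin, S.V1, S.V2} V ∧ V p = v} = ⊤

/-- The almost-Riemannian norm of a tangent vector `v` at `p`: the infimum of
`√(c² + u₁² + u₂²)` over the decompositions `v = c·𝒳(p) + u₁·B₁(p) + u₂·B₂(p)`,
infinite if there is no such decomposition. -/
def HeisARS.enorm (S : HeisARS) (p v : Heis) : ℝ≥0∞ :=
  sInf {r : ℝ≥0∞ | ∃ c u1 u2 : ℝ, c • S.lin p + u1 • S.V1 p + u2 • S.V2 p = v ∧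
    r = ENNReal.ofReal (Real.sqrt (c ^ 2 + u1 ^ 2 + u2 ^ 2))}

/-- A diffeomorphism of the Heisenberg group in coordinates: a smooth bijection of
`ℝ³` with smooth inverse. -/
structure IsHeisDiffeo (Φ : Heis → Heis) : Prop where
  bijective : Function.Bijective Φ
  smooth : ContDiff ℝ (⊤ : ℕ∞) Φ
  exists_smooth_inv : ∃ Ψ : Heis → Heis,
    Function.LeftInverse Ψ Φ ∧ Function.RightInverse Ψ Φ ∧ ContDiff ℝ (⊤ : ℕ∞) Ψ

/-- An isometry from the ARS `S` onto the ARS `S'` on the Heisenberg group. -/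
def IsHeisIsometry (S S' : HeisARS) (Φ : Heis → Heis) : Prop :=
  IsHeisDiffeo Φ ∧ ∀ p v : Heis, S'.enorm (Φ p) (fderiv ℝ Φ p v) = S.enorm p v

/-- Two ARSs on the Heisenberg group are isometric if there is an isometry from one
onto the other. -/
def HeisIsometric (S S' : HeisARS) : Prop := ∃ Φ, IsHeisIsometry S S' Φ

/-- The set `Z_𝒳` of singularities of the linear vector field of an ARS. -/
def HeisARS.linSingularities (S : HeisARS) : Set Heis := {g | S.lin g = 0}

/-- The coordinates of the basis vectors `X`, `Y`, `Z` of the Heisenberg Lie algebra. -/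
def XLv : Heis := (1, 0, 0)
def YLv : Heis := (0, 1, 0)
def ZLv : Heis := (0, 0, 1)

/-- The derivation `D = [[a,b,0],[c,d,0],[e,f,a+d]]` of an ARS, as a map on the Lie
algebra (in the basis `(X,Y,Z)`). -/
def HeisARS.Dfun (S : HeisARS) (v : Heis) : Heis :=
  (S.a * v.1 + S.b * v.2.1,
   S.c * v.1 + S.d * v.2.1,
   S.e * v.1 + S.f * v.2.1 + (S.a + S.d) * v.2.2)

/-- The singular locus `Z` of an ARS on the Heisenberg group: the points where the
frame `{𝒳, B₁, B₂}` does not span the tangent space. -/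
def HeisARS.singularLocus (S : HeisARS) : Set Heis :=
  {g | Submodule.span ℝ {S.lin g, S.V1 g, S.V2 g} ≠ ⊤}

/-- The tangent set of `A ⊆ ℝ³` at `p`: velocities at `p` of curves contained in `A`. -/
def tangentSetAt (A : Set Heis) (p : Heis) : Set Heis :=
  {v | ∃ γ : ℝ → Heis, (∀ t : ℝ, γ t ∈ A) ∧ γ 0 = p ∧ HasDerivAt γ v 0}

/-- The differential of the left translation by `g` (from the identity). -/
def heisDLT (g : Heis) (v : Heis) : Heis := (v.1, v.2.1, v.2.2 + g.1 * v.2.1)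

lemma heisLI_eq (u p : Heis) : heisLI u p = (u.1, u.2.1, u.2.2 + u.2.1 * p.1) := by
  simp [heisLI, heisX, heisY, heisZ, Prod.ext_iff]
  ring

lemma fderiv_W (S : HeisARS) (c : ℝ) (u : Heis) (p v : Heis) :
    fderiv ℝ (fun q => c • S.lin q + heisLI u q) p v =
      (c * (S.a * v.1 + S.b * v.2.1),
       c * (S.c * v.1 + S.d * v.2.1),
       c * (S.e * v.1 + S.f * v.2.1 + (S.a + S.d) * v.2.2 + S.c * p.1 * v.1 + S.b * p.2.1 * v.2.1)
         + u.2.1 * v.1) := by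
  have h1 : HasFDerivAt (fun q : Heis => q.1) (ContinuousLinearMap.fst ℝ ℝ (ℝ × ℝ)) p :=
    hasFDerivAt_fst
  have h2 : HasFDerivAt (fun q : Heis => q.2.1)
      ((ContinuousLinearMap.fst ℝ ℝ ℝ).comp (ContinuousLinearMap.snd ℝ ℝ (ℝ × ℝ))) p :=
    hasFDerivAt_fst.comp p hasFDerivAt_snd
  have h3 : HasFDerivAt (fun q : Heis => q.2.2)
      ((ContinuousLinearMap.snd ℝ ℝ ℝ).comp (ContinuousLinearMap.snd ℝ ℝ (ℝ × ℝ))) p :=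
    hasFDerivAt_snd.comp p hasFDerivAt_snd
  have hf1 := (((h1.const_mul S.a).add (h2.const_mul S.b)).const_mul c).add_const u.1
  have hf2 := (((h1.const_mul S.c).add (h2.const_mul S.d)).const_mul c).add_const u.2.1
  have hf3 := ((((((h1.const_mul S.e).add (h2.const_mul S.f)).add
      (h3.const_mul (S.a + S.d))).add ((h1.mul h1).const_mul (S.c / 2))).add
      ((h2.mul h2).const_mul (S.b / 2))).const_mul c).add
      ((h1.const_mul u.2.1).add_const u.2.2)
  have hF := hf1.prodMk (hf2.prodMk hf3)
  have hfun : (fun q => c • S.lin q + heisLI u q) = (fun q : Heis =>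
      (c * (S.a * q.1 + S.b * q.2.1) + u.1,
       c * (S.c * q.1 + S.d * q.2.1) + u.2.1,
       c * (S.e * q.1 + S.f * q.2.1 + (S.a + S.d) * q.2.2 + S.c / 2 * (q.1 * q.1)
         + S.b / 2 * (q.2.1 * q.2.1)) + (u.2.1 * q.1 + u.2.2))) := by
    funext q
    simp only [heisLI_eq, HeisARS.lin, Prod.smul_mk, Prod.mk_add_mk, smul_eq_mul,
      Prod.mk.injEq]
    refine ⟨trivial, trivial, by ring⟩
  rw [hfun]
  refine (congrArg (fun L => L v) hF.fderiv).trans ?_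
  simp [ContinuousLinearMap.add_apply, ContinuousLinearMap.comp_apply,
    ContinuousLinearMap.smul_apply, ContinuousLinearMap.prod_apply, smul_eq_mul,
    Prod.ext_iff]
  refine ⟨by ring, by ring, by ring⟩
lemma bracket_W (S : HeisARS) (c c' : ℝ) (u u' : Heis) :
    vfBracketH (fun p => c • S.lin p + heisLI u p) (fun p => c' • S.lin p + heisLI u' p)
      = fun p => (0 : ℝ) • S.lin p
          + heisLI (c' • S.Dfun u - c • S.Dfun u' + heisBracket u u') p := by
  funext p
  simp only [vfBracketH, fderiv_W]
  simp only [heisLI_eq, HeisARS.lin, HeisARS.Dfun, heisBracket, Prod.smul_mk, Prod.mk_add_mk,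
    Prod.mk_sub_mk, smul_eq_mul, Prod.mk.injEq]
  refine ⟨by ring, by ring, by ring⟩
lemma heisLI_add (u v : Heis) : ∀ p, heisLI (u + v) p = heisLI u p + heisLI v p := by
  intro p
  simp only [heisLI_eq, Prod.fst_add, Prod.snd_add, Prod.mk_add_mk, Prod.mk.injEq]
  exact ⟨trivial, trivial, by ring⟩

lemma heisLI_smul (r : ℝ) (u : Heis) : ∀ p, heisLI (r • u) p = r • heisLI u p := by
  intro p
  simp only [heisLI_eq, Prod.smul_fst, Prod.smul_snd, Prod.smul_mk, smul_eq_mul, Prod.mk.injEq]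
  exact ⟨trivial, trivial, by ring⟩

lemma heisLI_zero : ∀ p, heisLI (0 : Heis) p = 0 := by
  intro p
  have : ((0 : Heis)) = ((0, 0, 0) : Heis) := rfl
  rw [this, heisLI_eq]
  simp
/-- Structure of the Lie algebra generated by the frame when `Δ` is a `D`-invariant
subalgebra containing the center. -/
lemma gen_structure (S : HeisARS) (hZ : ZLv ∈ S.Delta)
    (hD : ∀ v ∈ S.Delta, S.Dfun v ∈ S.Delta) {V : Heis → Heis}
    (h : HeisLieGen {S.lin, S.V1, S.V2} V) :
    ∃ (c : ℝ) (u : Heis), u ∈ S.Delta ∧ V = fun p => c • S.lin p + heisLI u p := by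
  induction h with
  | @base V hV =>
    rcases hV with rfl | rfl | rfl
    · exact ⟨1, 0, zero_mem _, by funext p; simp [heisLI_zero]⟩
    · refine ⟨0, S.B1, Submodule.subset_span (by simp), ?_⟩
      funext p; simp [HeisARS.V1]
    · refine ⟨0, S.B2, Submodule.subset_span (by simp), ?_⟩
      funext p; simp [HeisARS.V2]
  | @add V W _ _ ihV ihW =>
    obtain ⟨c, u, hu, rfl⟩ := ihV
    obtain ⟨c', u', hu', rfl⟩ := ihW
    refine ⟨c + c', u + u', add_mem hu hu', ?_⟩
    funext p
    simp only [Pi.add_apply, heisLI_add, add_smul]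
    abel
  | @smul r V _ ihV =>
    obtain ⟨c, u, hu, rfl⟩ := ihV
    refine ⟨r * c, r • u, Submodule.smul_mem _ r hu, ?_⟩
    funext p
    simp only [Pi.smul_apply, heisLI_smul, mul_smul, smul_add]
  | @bracket V W _ _ ihV ihW =>
    obtain ⟨c, u, hu, rfl⟩ := ihV
    obtain ⟨c', u', hu', rfl⟩ := ihW
    refine ⟨0, c' • S.Dfun u - c • S.Dfun u' + heisBracket u u', ?_, bracket_W S c c' u u'⟩
    refine add_mem (sub_mem (Submodule.smul_mem _ _ (hD _ hu)) (Submodule.smul_mem _ _ (hD _ hu'))) ?_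
    have : heisBracket u u' = (u.1 * u'.2.1 - u'.1 * u.2.1) • ZLv := by
      simp [heisBracket, ZLv, Prod.smul_mk]
    rw [this]
    exact Submodule.smul_mem _ _ hZ
/-- The plane `{v | φ₁v₁ + φ₂v₂ + φ₃v₃ = 0}` as a submodule of `ℝ³`. -/
def kerf (φ1 φ2 φ3 : ℝ) : Submodule ℝ Heis where
  carrier := {v | φ1 * v.1 + φ2 * v.2.1 + φ3 * v.2.2 = 0}
  add_mem' := by
    intro a b ha hb
    simp only [Set.mem_setOf_eq, Prod.fst_add, Prod.snd_add] at *
    linear_combination ha + hb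
  zero_mem' := by simp
  smul_mem' := by
    intro r a ha
    simp only [Set.mem_setOf_eq, Prod.smul_fst, Prod.smul_snd, smul_eq_mul] at *
    linear_combination r * ha

lemma mem_kerf {φ1 φ2 φ3 : ℝ} {v : Heis} :
    v ∈ kerf φ1 φ2 φ3 ↔ φ1 * v.1 + φ2 * v.2.1 + φ3 * v.2.2 = 0 := Iff.rfl

/-- Determinant of three vectors of `ℝ³`. -/
def det3 (x y z : Heis) : ℝ :=
  x.1 * (y.2.1 * z.2.2 - z.2.1 * y.2.2) - x.2.1 * (y.1 * z.2.2 - z.1 * y.2.2)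
    + x.2.2 * (y.1 * z.2.1 - z.1 * y.2.1)

lemma span_top_of_det3 {x y z : Heis} (h : det3 x y z ≠ 0) :
    Submodule.span ℝ {x, y, z} = ⊤ := by
  rw [eq_top_iff]
  intro t _
  have hx : x ∈ Submodule.span ℝ ({x, y, z} : Set Heis) := Submodule.subset_span (by simp)
  have hy : y ∈ Submodule.span ℝ ({x, y, z} : Set Heis) := Submodule.subset_span (by simp)
  have hz : z ∈ Submodule.span ℝ ({x, y, z} : Set Heis) := Submodule.subset_span (by simp)
  have key : t = (det3 t y z / det3 x y z) • x + (det3 x t z / det3 x y z) • y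
      + (det3 x y t / det3 x y z) • z := by
    have h' := h
    simp only [det3] at *
    refine Prod.ext ?_ (Prod.ext ?_ ?_)
    · simp only [Prod.fst_add, Prod.smul_fst, smul_eq_mul]
      rw [div_mul_eq_mul_div, div_mul_eq_mul_div, div_mul_eq_mul_div, ← add_div,
        ← add_div, eq_div_iff h]
      ring
    · simp only [Prod.snd_add, Prod.smul_snd, Prod.fst_add, Prod.smul_fst, smul_eq_mul]
      rw [div_mul_eq_mul_div, div_mul_eq_mul_div, div_mul_eq_mul_div, ← add_div,
        ← add_div, eq_div_iff h]
      ring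
    · simp only [Prod.snd_add, Prod.smul_snd, smul_eq_mul]
      rw [div_mul_eq_mul_div, div_mul_eq_mul_div, div_mul_eq_mul_div, ← add_div,
        ← add_div, eq_div_iff h]
      ring
  rw [key]
  exact add_mem (add_mem (Submodule.smul_mem _ _ hx) (Submodule.smul_mem _ _ hy))
    (Submodule.smul_mem _ _ hz)
def M1 (S : HeisARS) : ℝ := S.B1.2.1 * S.B2.2.2 - S.B2.2.1 * S.B1.2.2
def M2 (S : HeisARS) : ℝ := S.B1.1 * S.B2.2.2 - S.B2.1 * S.B1.2.2
def Φ1 (S : HeisARS) : ℝ := M1 S * S.a - M2 S * S.c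
def Φ2 (S : HeisARS) : ℝ := M1 S * S.b - M2 S * S.d

lemma det_eq (S : HeisARS) (hκ : S.B1.1 * S.B2.2.1 = S.B2.1 * S.B1.2.1) (g : Heis) :
    det3 (S.lin g) (S.V1 g) (S.V2 g) = Φ1 S * g.1 + Φ2 S * g.2.1 := by
  simp only [det3, HeisARS.lin, HeisARS.V1, HeisARS.V2, heisLI_eq, Φ1, Φ2, M1, M2]
  linear_combination (S.e * g.1 + S.f * g.2.1 + (S.a + S.d) * g.2.2 + S.c * g.1 ^ 2 / 2
    + S.b * g.2.1 ^ 2 / 2 - g.1 * (S.c * g.1 + S.d * g.2.1)) * hκ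

lemma frame_mem_kerf (S : HeisARS) (hκ : S.B1.1 * S.B2.2.1 = S.B2.1 * S.B1.2.1)
    {g : Heis} (hφ : Φ1 S * g.1 + Φ2 S * g.2.1 = 0) :
    ({S.lin g, S.V1 g, S.V2 g} : Set Heis) ⊆ (kerf (M1 S) (-(M2 S)) 0 : Submodule ℝ Heis) := by
  rintro v (rfl | rfl | rfl)
  · rw [SetLike.mem_coe, mem_kerf]
    simp only [HeisARS.lin, Φ1, Φ2, M1, M2] at *
    linear_combination hφ
  · rw [SetLike.mem_coe, mem_kerf]
    simp only [HeisARS.V1, heisLI_eq, M1, M2]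
    linear_combination (-S.B1.2.2) * hκ
  · rw [SetLike.mem_coe, mem_kerf]
    simp only [HeisARS.V2, heisLI_eq, M1, M2]
    linear_combination (-S.B2.2.2) * hκ

lemma kerf_ne_top (S : HeisARS) (hm : ¬(M1 S = 0 ∧ M2 S = 0)) :
    (kerf (M1 S) (-(M2 S)) 0 : Submodule ℝ Heis) ≠ ⊤ := by
  intro h
  have : ((M1 S, -(M2 S), 0) : Heis) ∈ kerf (M1 S) (-(M2 S)) 0 := by
    rw [h]; trivial
  rw [mem_kerf] at this
  simp only at this
  exact hm ⟨by nlinarith [sq_nonneg (M1 S), sq_nonneg (M2 S)],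
    by nlinarith [sq_nonneg (M1 S), sq_nonneg (M2 S)]⟩

lemma sing_char (S : HeisARS) (hκ : S.B1.1 * S.B2.2.1 = S.B2.1 * S.B1.2.1)
    (hm : ¬(M1 S = 0 ∧ M2 S = 0)) (g : Heis) :
    g ∈ S.singularLocus ↔ Φ1 S * g.1 + Φ2 S * g.2.1 = 0 := by
  constructor
  · intro hg
    by_contra hφ
    exact hg (span_top_of_det3 (by rw [det_eq S hκ g]; exact hφ))
  · intro hφ hTop
    have hle := Submodule.span_le.2 (frame_mem_kerf S hκ hφ)
    rw [hTop, top_le_iff] at hle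
    exact kerf_ne_top S hm hle
lemma zlv_mem (S : HeisARS) (hκ : S.B1.1 * S.B2.2.1 = S.B2.1 * S.B1.2.1)
    (hm : ¬(M1 S = 0 ∧ M2 S = 0)) : ZLv ∈ S.Delta := by
  have hB1 : S.B1 ∈ S.Delta := Submodule.subset_span (by simp)
  have hB2 : S.B2 ∈ S.Delta := Submodule.subset_span (by simp)
  rcases not_and_or.1 hm with h | h
  · have key : S.B2.2.1 • S.B1 - S.B1.2.1 • S.B2 = ((0, 0, -(M1 S)) : Heis) := by
      refine Prod.ext ?_ (Prod.ext ?_ ?_)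
      · simp only [Prod.fst_sub, Prod.smul_fst, smul_eq_mul]
        linear_combination hκ
      · simp only [Prod.snd_sub, Prod.smul_snd, Prod.fst_sub, Prod.smul_fst, smul_eq_mul]
        ring
      · simp only [Prod.snd_sub, Prod.smul_snd, smul_eq_mul, M1]
        ring
    have : ZLv = (-(M1 S))⁻¹ • ((0, 0, -(M1 S)) : Heis) := by
      have hne : -(M1 S) ≠ 0 := neg_ne_zero.2 h
      simp only [ZLv, Prod.smul_mk, smul_eq_mul, mul_zero]
      rw [inv_mul_cancel₀ hne]
    rw [this, ← key]
    exact Submodule.smul_mem _ _ (sub_mem (Submodule.smul_mem _ _ hB1) (Submodule.smul_mem _ _ hB2))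
  · have key : S.B2.1 • S.B1 - S.B1.1 • S.B2 = ((0, 0, -(M2 S)) : Heis) := by
      refine Prod.ext ?_ (Prod.ext ?_ ?_)
      · simp only [Prod.fst_sub, Prod.smul_fst, smul_eq_mul]
        ring
      · simp only [Prod.snd_sub, Prod.smul_snd, Prod.fst_sub, Prod.smul_fst, smul_eq_mul]
        linear_combination -hκ
      · simp only [Prod.snd_sub, Prod.smul_snd, smul_eq_mul, M2]
        ring
    have : ZLv = (-(M2 S))⁻¹ • ((0, 0, -(M2 S)) : Heis) := by
      have hne : -(M2 S) ≠ 0 := neg_ne_zero.2 h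
      simp only [ZLv, Prod.smul_mk, smul_eq_mul, mul_zero]
      rw [inv_mul_cancel₀ hne]
    rw [this, ← key]
    exact Submodule.smul_mem _ _ (sub_mem (Submodule.smul_mem _ _ hB1) (Submodule.smul_mem _ _ hB2))

lemma mvec_mem (S : HeisARS) : ((M2 S, M1 S, 0) : Heis) ∈ S.Delta := by
  have key : S.B2.2.2 • S.B1 - S.B1.2.2 • S.B2 = ((M2 S, M1 S, 0) : Heis) := by
    refine Prod.ext ?_ (Prod.ext ?_ ?_)
    · simp only [Prod.fst_sub, Prod.smul_fst, smul_eq_mul, M2]; ring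
    · simp only [Prod.snd_sub, Prod.smul_snd, Prod.fst_sub, Prod.smul_fst, smul_eq_mul, M1]; ring
    · simp only [Prod.snd_sub, Prod.smul_snd, smul_eq_mul]; ring
  rw [← key]
  exact sub_mem (Submodule.smul_mem _ _ (Submodule.subset_span (by simp)))
    (Submodule.smul_mem _ _ (Submodule.subset_span (by simp)))

lemma delta_char (S : HeisARS) (hκ : S.B1.1 * S.B2.2.1 = S.B2.1 * S.B1.2.1)
    (hm : ¬(M1 S = 0 ∧ M2 S = 0)) (v : Heis) :
    v ∈ S.Delta ↔ M1 S * v.1 - M2 S * v.2.1 = 0 := by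
  constructor
  · intro hv
    have hle : S.Delta ≤ kerf (M1 S) (-(M2 S)) 0 := by
      rw [HeisARS.Delta, Submodule.span_le]
      rintro w (rfl | rfl)
      · rw [SetLike.mem_coe, mem_kerf]
        simp only [M1, M2]
        linear_combination (-S.B1.2.2) * hκ
      · rw [SetLike.mem_coe, mem_kerf]
        simp only [M1, M2]
        linear_combination (-S.B2.2.2) * hκ
    have := hle hv
    rw [mem_kerf] at this
    linarith [this]
  · intro hv
    rcases not_and_or.1 hm with h | h
    · have : v = (v.2.1 / M1 S) • ((M2 S, M1 S, 0) : Heis) + v.2.2 • ZLv := by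
        refine Prod.ext ?_ (Prod.ext ?_ ?_)
        · simp only [Prod.fst_add, Prod.smul_fst, smul_eq_mul, ZLv]
          field_simp
          linear_combination hv
        · simp only [Prod.snd_add, Prod.smul_snd, Prod.fst_add, Prod.smul_fst, smul_eq_mul, ZLv]
          field_simp
          ring
        · simp only [Prod.snd_add, Prod.smul_snd, smul_eq_mul, ZLv]
          ring
      rw [this]
      exact add_mem (Submodule.smul_mem _ _ (mvec_mem S)) (Submodule.smul_mem _ _ (zlv_mem S hκ hm))
    · have hv21 : M2 S * v.2.1 = M1 S * v.1 := by linarith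
      have : v = (v.1 / M2 S) • ((M2 S, M1 S, 0) : Heis) + v.2.2 • ZLv := by
        refine Prod.ext ?_ (Prod.ext ?_ ?_)
        · simp only [Prod.fst_add, Prod.smul_fst, smul_eq_mul, ZLv]
          field_simp
          ring
        · simp only [Prod.snd_add, Prod.smul_snd, Prod.fst_add, Prod.smul_fst, smul_eq_mul, ZLv]
          field_simp
          linear_combination -hv
        · simp only [Prod.snd_add, Prod.smul_snd, smul_eq_mul, ZLv]
          ring
      rw [this]
      exact add_mem (Submodule.smul_mem _ _ (mvec_mem S)) (Submodule.smul_mem _ _ (zlv_mem S hκ hm))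
lemma dfun_char (S : HeisARS) (hκ : S.B1.1 * S.B2.2.1 = S.B2.1 * S.B1.2.1)
    (hm : ¬(M1 S = 0 ∧ M2 S = 0)) (v : Heis) :
    S.Dfun v ∈ S.Delta ↔ Φ1 S * v.1 + Φ2 S * v.2.1 = 0 := by
  rw [delta_char S hκ hm]
  simp only [HeisARS.Dfun, Φ1, Φ2]
  constructor <;> intro h <;> linear_combination h

lemma tangent_char (S : HeisARS) (hκ : S.B1.1 * S.B2.2.1 = S.B2.1 * S.B1.2.1)
    (hm : ¬(M1 S = 0 ∧ M2 S = 0)) {g : Heis} (hg : g ∈ S.singularLocus) :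
    tangentSetAt S.singularLocus g = {v : Heis | Φ1 S * v.1 + Φ2 S * v.2.1 = 0} := by
  ext v
  constructor
  · rintro ⟨γ, hγZ, hγ0, hγd⟩
    have hfst : HasDerivAt (fun t => (γ t).1) v.1 0 := by
      have := (hasFDerivAt_fst (p := γ 0)).comp_hasDerivAt 0 hγd
      exact this
    have hsnd : HasDerivAt (fun t => (γ t).2.1) v.2.1 0 := by
      have := ((hasFDerivAt_fst (p := (γ 0).2)).comp (γ 0)
        (hasFDerivAt_snd (p := γ 0))).comp_hasDerivAt 0 hγd
      exact this
    have hcomp : HasDerivAt (fun t => Φ1 S * (γ t).1 + Φ2 S * (γ t).2.1)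
        (Φ1 S * v.1 + Φ2 S * v.2.1) 0 := (hfst.const_mul _).add (hsnd.const_mul _)
    have hzero : (fun t => Φ1 S * (γ t).1 + Φ2 S * (γ t).2.1) = fun _ => 0 :=
      funext fun t => (sing_char S hκ hm (γ t)).1 (hγZ t)
    rw [hzero] at hcomp
    have := hcomp.unique (hasDerivAt_const 0 0)
    simpa using this
  · intro hv
    have hv' : Φ1 S * v.1 + Φ2 S * v.2.1 = 0 := hv
    have hg' := (sing_char S hκ hm g).1 hg
    refine ⟨fun t => g + t • v, ?_, by simp, ?_⟩
    · intro t
      rw [sing_char S hκ hm]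
      have h1 : (g + t • v).1 = g.1 + t * v.1 := rfl
      have h2 : (g + t • v).2.1 = g.2.1 + t * v.2.1 := rfl
      rw [h1, h2]
      linear_combination hg' + t * hv'
    · have h1 : HasDerivAt (fun t : ℝ => t • v) v 0 := by
        simpa using (hasDerivAt_id (0 : ℝ)).smul_const v
      simpa using h1.const_add g

lemma dlt_image (S : HeisARS) (hκ : S.B1.1 * S.B2.2.1 = S.B2.1 * S.B1.2.1)
    (hm : ¬(M1 S = 0 ∧ M2 S = 0)) (g : Heis) :
    heisDLT g '' (S.Delta : Set Heis) = (S.Delta : Set Heis) := by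
  ext w
  constructor
  · rintro ⟨v, hv, rfl⟩
    rw [SetLike.mem_coe, delta_char S hκ hm] at *
    exact hv
  · intro hw
    refine ⟨(w.1, w.2.1, w.2.2 - g.1 * w.2.1), ?_, ?_⟩
    · rw [SetLike.mem_coe, delta_char S hκ hm] at *
      exact hw
    · simp only [heisDLT]
      refine Prod.ext rfl (Prod.ext rfl ?_)
      simp only
      ring
lemma span_pair_ne_top (x y : Heis) : Submodule.span ℝ {x, y} ≠ ⊤ := by
  classical
  intro h
  have h3 : Module.finrank ℝ Heis = 3 := by
    simp [Module.finrank_prod, Module.finrank_self]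
  have hcard : ({x, y} : Set Heis).toFinset.card < Module.finrank ℝ Heis := by
    rw [h3]
    have : ({x, y} : Set Heis).toFinset.card ≤ 2 := by
      rw [Set.toFinset_insert, Set.toFinset_singleton]
      exact (Finset.card_insert_le _ _).trans (by simp)
    omega
  exact absurd h (span_lt_top_of_card_lt_finrank hcard).ne

/-- For an ARS on the Heisenberg group whose distribution `Δ` is a
Lie subalgebra, the singular locus `Z` is a Lie subgroup whose Lie algebra (tangent
space at the identity) is `D⁻¹(Δ)`, and `Δ` is nowhere tangent to `Z`; consequently
there are no tangency points. -/
theorem heis_subalgebra_singularLocus_subgroup_no_tangency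
    (S : HeisARS) (hS : S.IsARS) (hsub : heisBracket S.B1 S.B2 ∈ S.Delta) :
    (heisOne ∈ S.singularLocus ∧
      (∀ p ∈ S.singularLocus, ∀ q ∈ S.singularLocus, heisMul p q ∈ S.singularLocus) ∧
      (∀ p ∈ S.singularLocus, heisInv p ∈ S.singularLocus)) ∧
    tangentSetAt S.singularLocus heisOne = {v : Heis | S.Dfun v ∈ S.Delta} ∧
    ∀ g ∈ S.singularLocus,
      heisDLT g '' (S.Delta : Set Heis) ≠ tangentSetAt S.singularLocus g := by
  obtain ⟨⟨p0, hp0⟩, hrank⟩ := hS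
  -- `κ = 0`, i.e. the horizontal projections of `B₁, B₂` are parallel
  have hκ : S.B1.1 * S.B2.2.1 = S.B2.1 * S.B1.2.1 := by
    by_contra hk
    have hne : S.B1.1 * S.B2.2.1 - S.B2.1 * S.B1.2.1 ≠ 0 := sub_ne_zero.2 hk
    have h0 : ((0, 0, S.B1.1 * S.B2.2.1 - S.B2.1 * S.B1.2.1) : Heis) ∈ S.Delta := hsub
    have hzd : ZLv ∈ S.Delta := by
      have heq : ZLv = (S.B1.1 * S.B2.2.1 - S.B2.1 * S.B1.2.1)⁻¹ •
          ((0, 0, S.B1.1 * S.B2.2.1 - S.B2.1 * S.B1.2.1) : Heis) := by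
        simp only [ZLv, Prod.smul_mk, smul_eq_mul, mul_zero]
        rw [inv_mul_cancel₀ hne]
      rw [heq]
      exact Submodule.smul_mem _ _ h0
    obtain ⟨s, t, hst⟩ := Submodule.mem_span_pair.1 hzd
    have h1 : s * S.B1.1 + t * S.B2.1 = 0 := by
      have := congrArg Prod.fst hst
      simpa [ZLv, Prod.fst_add, Prod.smul_fst] using this
    have h2 : s * S.B1.2.1 + t * S.B2.2.1 = 0 := by
      have := congrArg (fun w : Heis => w.2.1) hst
      simpa [ZLv, Prod.snd_add, Prod.smul_snd, Prod.fst_add, Prod.smul_fst] using this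
    have h3 : s * S.B1.2.2 + t * S.B2.2.2 = 1 := by
      have := congrArg (fun w : Heis => w.2.2) hst
      simpa [ZLv, Prod.snd_add, Prod.smul_snd] using this
    have hs : s * (S.B1.1 * S.B2.2.1 - S.B2.1 * S.B1.2.1) = 0 := by
      linear_combination S.B2.2.1 * h1 - S.B2.1 * h2
    have ht : t * (S.B1.1 * S.B2.2.1 - S.B2.1 * S.B1.2.1) = 0 := by
      linear_combination S.B1.1 * h2 - S.B1.2.1 * h1
    have hs0 : s = 0 := by
      rcases mul_eq_zero.1 hs with h | h
      · exact h
      · exact absurd h hne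
    have ht0 : t = 0 := by
      rcases mul_eq_zero.1 ht with h | h
      · exact h
      · exact absurd h hne
    rw [hs0, ht0] at h3
    norm_num at h3
  -- `(m₁, m₂) ≠ (0,0)`, i.e. `B₁, B₂` are linearly independent
  have hm : ¬(M1 S = 0 ∧ M2 S = 0) := by
    rintro ⟨hm1, hm2⟩
    simp only [M1] at hm1
    simp only [M2] at hm2
    have hdep : ∃ s t : ℝ, (s ≠ 0 ∨ t ≠ 0) ∧ s • S.B1 + t • S.B2 = 0 := by
      by_cases hb11 : S.B1.1 = 0
      · by_cases hb12 : S.B1.2.1 = 0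
        · by_cases hb13 : S.B1.2.2 = 0
          · refine ⟨1, 0, Or.inl one_ne_zero, ?_⟩
            refine Prod.ext ?_ (Prod.ext ?_ ?_) <;>
              simp [Prod.fst_add, Prod.snd_add, Prod.smul_fst, Prod.smul_snd, hb11, hb12, hb13]
          · refine ⟨S.B2.2.2, -S.B1.2.2, Or.inr (neg_ne_zero.2 hb13), ?_⟩
            refine Prod.ext ?_ (Prod.ext ?_ ?_) <;>
              simp only [Prod.fst_add, Prod.snd_add, Prod.smul_fst, Prod.smul_snd, smul_eq_mul,
                Prod.fst_zero, Prod.snd_zero]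
            · linear_combination hm2
            · linear_combination hm1
            · ring
        · refine ⟨S.B2.2.1, -S.B1.2.1, Or.inr (neg_ne_zero.2 hb12), ?_⟩
          refine Prod.ext ?_ (Prod.ext ?_ ?_) <;>
            simp only [Prod.fst_add, Prod.snd_add, Prod.smul_fst, Prod.smul_snd, smul_eq_mul,
              Prod.fst_zero, Prod.snd_zero]
          · linear_combination hκ
          · ring
          · linear_combination -hm1
      · refine ⟨S.B2.1, -S.B1.1, Or.inr (neg_ne_zero.2 hb11), ?_⟩
        refine Prod.ext ?_ (Prod.ext ?_ ?_) <;>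
          simp only [Prod.fst_add, Prod.snd_add, Prod.smul_fst, Prod.smul_snd, smul_eq_mul,
            Prod.fst_zero, Prod.snd_zero]
        · ring
        · linear_combination -hκ
        · linear_combination -hm2
    obtain ⟨s, t, hst, hrel⟩ := hdep
    have hLI : ∀ p, s • S.V1 p + t • S.V2 p = 0 := by
      intro p
      rw [HeisARS.V1, HeisARS.V2, ← heisLI_smul, ← heisLI_smul, ← heisLI_add, hrel, heisLI_zero]
    rcases hst with hs | ht
    · have hV1 : S.V1 p0 = (-(s⁻¹ * t)) • S.V2 p0 := by
        have h := congrArg (fun w => s⁻¹ • w) (hLI p0)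
        simp only [smul_add, smul_smul, inv_mul_cancel₀ hs, one_smul, smul_zero] at h
        have := eq_neg_of_add_eq_zero_left h
        rw [this, neg_smul]
      have hsub3 : ({S.lin p0, S.V1 p0, S.V2 p0} : Set Heis) ⊆
          (Submodule.span ℝ {S.lin p0, S.V2 p0} : Set Heis) := by
        rintro v (rfl | rfl | rfl)
        · exact Submodule.subset_span (by simp)
        · rw [SetLike.mem_coe, hV1]
          exact Submodule.smul_mem _ _ (Submodule.subset_span (by simp))
        · exact Submodule.subset_span (by simp)
      have hle := Submodule.span_le.2 hsub3
      rw [hp0, top_le_iff] at hle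
      exact span_pair_ne_top _ _ hle
    · have hV2 : S.V2 p0 = (-(t⁻¹ * s)) • S.V1 p0 := by
        have h := congrArg (fun w => t⁻¹ • w) (hLI p0)
        simp only [smul_add, smul_smul, inv_mul_cancel₀ ht, one_smul, smul_zero] at h
        rw [add_comm] at h
        have := eq_neg_of_add_eq_zero_left h
        rw [this, neg_smul]
      have hsub3 : ({S.lin p0, S.V1 p0, S.V2 p0} : Set Heis) ⊆
          (Submodule.span ℝ {S.lin p0, S.V1 p0} : Set Heis) := by
        rintro v (rfl | rfl | rfl)
        · exact Submodule.subset_span (by simp)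
        · exact Submodule.subset_span (by simp)
        · rw [SetLike.mem_coe, hV2]
          exact Submodule.smul_mem _ _ (Submodule.subset_span (by simp))
      have hle := Submodule.span_le.2 hsub3
      rw [hp0, top_le_iff] at hle
      exact span_pair_ne_top _ _ hle
  -- the three parts
  have hOne : heisOne ∈ S.singularLocus := by
    rw [sing_char S hκ hm]
    simp [heisOne]
  refine ⟨⟨hOne, ?_, ?_⟩, ?_, ?_⟩
  · intro p hp q hq
    rw [sing_char S hκ hm] at hp hq ⊢
    have h1 : (heisMul p q).1 = p.1 + q.1 := rfl
    have h2 : (heisMul p q).2.1 = p.2.1 + q.2.1 := rfl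
    rw [h1, h2]
    linear_combination hp + hq
  · intro p hp
    rw [sing_char S hκ hm] at hp ⊢
    have h1 : (heisInv p).1 = -p.1 := rfl
    have h2 : (heisInv p).2.1 = -p.2.1 := rfl
    rw [h1, h2]
    linear_combination -hp
  · rw [tangent_char S hκ hm hOne]
    ext v
    simp only [Set.mem_setOf_eq]
    exact (dfun_char S hκ hm v).symm
  · intro g hg heq
    rw [dlt_image S hκ hm g, tangent_char S hκ hm hg] at heq
    -- then `D(Δ) ⊆ Δ`, contradicting the rank condition
    have hDsub : ∀ v ∈ S.Delta, S.Dfun v ∈ S.Delta := by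
      intro v hv
      rw [dfun_char S hκ hm]
      have : v ∈ {v : Heis | Φ1 S * v.1 + Φ2 S * v.2.1 = 0} := heq ▸ (SetLike.mem_coe.2 hv)
      exact this
    have hsub2 : {v : Heis | ∃ V : Heis → Heis, HeisLieGen {S.lin, S.V1, S.V2} V ∧ V heisOne = v}
        ⊆ (S.Delta : Set Heis) := by
      rintro v ⟨V, hV, rfl⟩
      obtain ⟨c, u, hu, rfl⟩ := gen_structure S (zlv_mem S hκ hm) hDsub hV
      have hlin0 : S.lin heisOne = 0 := by
        have : S.lin heisOne = ((0, 0, 0) : Heis) := by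
          simp [HeisARS.lin, heisOne]
        rw [this]; rfl
      have hval : c • S.lin heisOne + heisLI u heisOne = u := by
        rw [hlin0, smul_zero, zero_add, heisLI_eq]
        refine Prod.ext rfl (Prod.ext rfl ?_)
        simp [heisOne]
      show c • S.lin heisOne + heisLI u heisOne ∈ S.Delta
      rw [hval]
      exact hu
    have hle := Submodule.span_le.2 hsub2
    rw [hrank heisOne, top_le_iff] at hle
    have : ((M1 S, -(M2 S), 0) : Heis) ∈ S.Delta := hle.symm ▸ Submodule.mem_top
    rw [delta_char S hκ hm] at this
    simp only at this
    exact hm ⟨by nlinarith [sq_nonneg (M1 S), sq_nonneg (M2 S)],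
      by nlinarith [sq_nonneg (M1 S), sq_nonneg (M2 S)]⟩

end
end
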